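/- (Coercivity of the strain gradient elastic energy.) Let λ ≥ 0, μ > 0 and ι > 0. For every smooth compactly supported vector field v = (v₁,v₂) ∈ C_c^∞(ℝ², ℝ²), the strain gradient elastic energy a(v,v) := ∫_{ℝ²} [ λ (div v)² + 2μ |ε(v)|² ] dx + ι² ∫_{ℝ²} [ λ |∇(div v)|² + 2μ |∇ε(v)|² ] dx satisfies a(v,v) ≥ (2 − √2) μ ( ∫_{ℝ²} |∇v|² dx + ι² ∫_{ℝ²} |∇²v|² dx ). -/

import Mathlib

open MeasureTheory

/-- First partial derivative `∂₁ f` of `f : ℝ² → ℝ`. -/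
noncomputable def pd1 (f : ℝ × ℝ → ℝ) : ℝ × ℝ → ℝ := fun x => fderiv ℝ f x (1, 0)

/-- Second partial derivative `∂₂ f` of `f : ℝ² → ℝ`. -/
noncomputable def pd2 (f : ℝ × ℝ → ℝ) : ℝ × ℝ → ℝ := fun x => fderiv ℝ f x (0, 1)

/-- Divergence `div v = ∂₁v₁ + ∂₂v₂`. -/
noncomputable def divv (v1 v2 : ℝ × ℝ → ℝ) : ℝ × ℝ → ℝ := fun x => pd1 v1 x + pd2 v2 x

/-- Squared Frobenius norm of the symmetric gradient (linearized strain):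
`|ε(v)|² = |∂₁v₁|² + |∂₂v₂|² + (1/2)|∂₂v₁ + ∂₁v₂|²`. -/
noncomputable def epsSq (v1 v2 : ℝ × ℝ → ℝ) (x : ℝ × ℝ) : ℝ :=
  (pd1 v1 x) ^ 2 + (pd2 v2 x) ^ 2 + (1 / 2) * (pd2 v1 x + pd1 v2 x) ^ 2

/-- Squared gradient norm `|∇v|² = Σ_{i,j} |∂_j v_i|²`. -/
noncomputable def gradSq (v1 v2 : ℝ × ℝ → ℝ) (x : ℝ × ℝ) : ℝ :=
  (pd1 v1 x) ^ 2 + (pd2 v1 x) ^ 2 + (pd1 v2 x) ^ 2 + (pd2 v2 x) ^ 2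

/-- Squared Frobenius norm of the strain gradient `|∇ε(v)|²`. -/
noncomputable def gradEpsSq (v1 v2 : ℝ × ℝ → ℝ) (x : ℝ × ℝ) : ℝ :=
  (pd1 (pd1 v1) x) ^ 2 + (pd1 (pd2 v1) x) ^ 2 + (pd1 (pd2 v2) x) ^ 2 + (pd2 (pd2 v2) x) ^ 2
    + (1 / 2) * (pd1 (pd2 v1) x + pd1 (pd1 v2) x) ^ 2
    + (1 / 2) * (pd1 (pd2 v2) x + pd2 (pd2 v1) x) ^ 2

/-- Squared Hessian norm `|∇²v|²`, each distinct second derivative counted once. -/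
noncomputable def hessSq (v1 v2 : ℝ × ℝ → ℝ) (x : ℝ × ℝ) : ℝ :=
  (pd1 (pd1 v1) x) ^ 2 + (pd1 (pd2 v1) x) ^ 2 + (pd2 (pd2 v1) x) ^ 2
    + (pd1 (pd1 v2) x) ^ 2 + (pd1 (pd2 v2) x) ^ 2 + (pd2 (pd2 v2) x) ^ 2

/-- `|∇(div v)|² = |∂₁(div v)|² + |∂₂(div v)|²`. -/
noncomputable def gradDivSq (v1 v2 : ℝ × ℝ → ℝ) (x : ℝ × ℝ) : ℝ :=
  (pd1 (divv v1 v2) x) ^ 2 + (pd2 (divv v1 v2) x) ^ 2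

/-! Korn's identity `2 ∫ |ε(v)|² = ∫ |∇v|² + ∫ (div v)²` holds because the Jacobian
determinant `∂₁v₁ ∂₂v₂ - ∂₂v₁ ∂₁v₂` of a compactly supported field integrates to zero
(integrate by parts twice and use the symmetry of second derivatives), so the first-order
energy is at least `μ ∫ |∇v|²`. The second-order energy is bounded pointwise: in `2 |∇ε(v)|²`
the pairs `(∂₁₂v₁, ∂₁₁v₂)` and `(∂₁₂v₂, ∂₂₂v₁)` enter through the form `2b² + (b + e)²`,
whose smallest eigenvalue is `2 - √2`. -/

section IntegrationByParts

variable {E : Type*} [NormedAddCommGroup E] [NormedSpace ℝ E]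

theorem fderiv_fderiv_apply_comm {F : Type*} [NormedAddCommGroup F] [NormedSpace ℝ F]
    {g : E → F} (hg : ContDiff ℝ 2 g) (x u w : E) :
    fderiv ℝ (fun y => fderiv ℝ g y w) x u = fderiv ℝ (fun y => fderiv ℝ g y u) x w := by
  have hd : DifferentiableAt ℝ (fderiv ℝ g) x :=
    (hg.fderiv_right (m := 1) le_rfl).differentiable one_ne_zero x
  rw [fderiv_clm_apply hd (differentiableAt_const _),
    fderiv_clm_apply hd (differentiableAt_const _)]
  simpa using hg.contDiffAt.isSymmSndFDerivAt (by simp) u w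

variable [FiniteDimensional ℝ E] [MeasurableSpace E] [BorelSpace E]
  {μ : Measure E} [μ.IsAddHaarMeasure]

theorem integral_fderiv_mul_fderiv_comm {f g : E → ℝ} (hf : ContDiff ℝ 1 f) (hg : ContDiff ℝ 2 g)
    (hcg : HasCompactSupport g) (u w : E) :
    ∫ x, fderiv ℝ f x u * fderiv ℝ g x w ∂μ = ∫ x, fderiv ℝ f x w * fderiv ℝ g x u ∂μ := by
  have ibp (u w : E) : ∫ x, fderiv ℝ f x u * fderiv ℝ g x w ∂μ =
      -∫ x, f x * fderiv ℝ (fun y => fderiv ℝ g y w) x u ∂μ := by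
    have hgw : ContDiff ℝ 1 (fun y => fderiv ℝ g y w) :=
      (hg.fderiv_right le_rfl).clm_apply contDiff_const
    refine (neg_eq_iff_eq_neg.mpr
      (integral_mul_fderiv_eq_neg_fderiv_mul_of_integrable ?_ ?_ ?_ ?_ ?_)).symm
    · exact ((hf.continuous_fderiv one_ne_zero).clm_apply continuous_const).mul hgw.continuous
        |>.integrable_of_hasCompactSupport (hcg.fderiv_apply (𝕜 := ℝ) w).mul_left
    · exact (hf.continuous.mul ((hgw.continuous_fderiv one_ne_zero).clm_apply continuous_const))
        |>.integrable_of_hasCompactSupport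
          ((hcg.fderiv_apply (𝕜 := ℝ) w).fderiv_apply (𝕜 := ℝ) u).mul_left
    · exact (hf.continuous.mul hgw.continuous).integrable_of_hasCompactSupport
        (hcg.fderiv_apply (𝕜 := ℝ) w).mul_left
    · exact fun x _ => hf.differentiable one_ne_zero x
    · exact fun x _ => hgw.differentiable one_ne_zero x
  simp only [ibp, fderiv_fderiv_apply_comm hg _ u w]

end IntegrationByParts

section PartialDerivatives

variable {f g : ℝ × ℝ → ℝ} {x : ℝ × ℝ}

@[fun_prop]
theorem ContDiff.pd1 (hf : ContDiff ℝ (⊤ : ℕ∞) f) : ContDiff ℝ (⊤ : ℕ∞) (pd1 f) :=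
  (hf.fderiv_right (by simp)).clm_apply contDiff_const

@[fun_prop]
theorem ContDiff.pd2 (hf : ContDiff ℝ (⊤ : ℕ∞) f) : ContDiff ℝ (⊤ : ℕ∞) (pd2 f) :=
  (hf.fderiv_right (by simp)).clm_apply contDiff_const

@[fun_prop]
theorem ContDiff.divv (hf : ContDiff ℝ (⊤ : ℕ∞) f) (hg : ContDiff ℝ (⊤ : ℕ∞) g) :
    ContDiff ℝ (⊤ : ℕ∞) (divv f g) :=
  hf.pd1.add hg.pd2

@[simp]
theorem pd1_eq_zero_of_notMem_tsupport (hx : x ∉ tsupport f) : pd1 f x = 0 := by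
  simp [pd1, fderiv_of_notMem_tsupport (𝕜 := ℝ) hx]

@[simp]
theorem pd2_eq_zero_of_notMem_tsupport (hx : x ∉ tsupport f) : pd2 f x = 0 := by
  simp [pd2, fderiv_of_notMem_tsupport (𝕜 := ℝ) hx]

@[simp]
theorem notMem_tsupport_pd1 (hx : x ∉ tsupport f) : x ∉ tsupport (pd1 f) :=
  fun h => hx (tsupport_fderiv_apply_subset ℝ (1, 0) h)

@[simp]
theorem notMem_tsupport_pd2 (hx : x ∉ tsupport f) : x ∉ tsupport (pd2 f) :=
  fun h => hx (tsupport_fderiv_apply_subset ℝ (0, 1) h)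

@[simp]
theorem notMem_tsupport_divv (hf : x ∉ tsupport f) (hg : x ∉ tsupport g) :
    x ∉ tsupport (divv f g) :=
  fun h => (tsupport_add _ _ h).elim (notMem_tsupport_pd1 hf) (notMem_tsupport_pd2 hg)

theorem integral_pd1_mul_pd2_comm (hf : ContDiff ℝ (⊤ : ℕ∞) f) (hg : ContDiff ℝ (⊤ : ℕ∞) g)
    (hcg : HasCompactSupport g) :
    ∫ x, pd1 f x * pd2 g x = ∫ x, pd2 f x * pd1 g x :=
  integral_fderiv_mul_fderiv_comm (contDiff_infty.mp hf 1) (contDiff_infty.mp hg 2) hcg _ _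

end PartialDerivatives

theorem Continuous.integrable_of_eq_zero_off_tsupport {X : Type*} [TopologicalSpace X]
    [T2Space X] [MeasurableSpace X] [OpensMeasurableSpace X] {μ : Measure X}
    [IsFiniteMeasureOnCompacts μ] {f g h : X → ℝ} (hh : Continuous h)
    (hf : HasCompactSupport f) (hg : HasCompactSupport g)
    (h0 : ∀ x, x ∉ tsupport f → x ∉ tsupport g → h x = 0) : Integrable h μ :=
  hh.integrable_of_hasCompactSupport <| .intro (hf.union hg) fun x hx =>
    h0 x (fun h => hx (.inl h)) (fun h => hx (.inr h))

theorem sub_sqrt_two_mul_sq_add_sq_le (b e : ℝ) :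
    (2 - √2) * (b ^ 2 + e ^ 2) ≤ 2 * b ^ 2 + (b + e) ^ 2 := by
  have hs : √2 ^ 2 = 2 := Real.sq_sqrt zero_le_two
  -- `(1 + √2) (RHS - LHS) = ((1 + √2) b + e) ^ 2`, as `(1 + √2) (√2 - 1) = 1`.
  nlinarith [sq_nonneg ((1 + √2) * b + e), Real.sqrt_nonneg 2]

theorem sub_sqrt_two_mul_hessSq_le (v1 v2 : ℝ × ℝ → ℝ) (x : ℝ × ℝ) :
    (2 - √2) * hessSq v1 v2 x ≤ 2 * gradEpsSq v1 v2 x := by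
  have h1 := sub_sqrt_two_mul_sq_add_sq_le (pd1 (pd2 v1) x) (pd1 (pd1 v2) x)
  have h2 := sub_sqrt_two_mul_sq_add_sq_le (pd1 (pd2 v2) x) (pd2 (pd2 v1) x)
  have h3 := mul_nonneg (Real.sqrt_nonneg 2) (sq_nonneg (pd1 (pd1 v1) x))
  have h4 := mul_nonneg (Real.sqrt_nonneg 2) (sq_nonneg (pd2 (pd2 v2) x))
  simp only [hessSq, gradEpsSq]
  linarith

section Energy

variable {v1 v2 : ℝ × ℝ → ℝ}

theorem two_mul_integral_epsSq (h1 : ContDiff ℝ (⊤ : ℕ∞) v1) (h2 : ContDiff ℝ (⊤ : ℕ∞) v2)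
    (hc1 : HasCompactSupport v1) (hc2 : HasCompactSupport v2) :
    2 * ∫ x, epsSq v1 v2 x = (∫ x, gradSq v1 v2 x) + ∫ x, divv v1 v2 x ^ 2 := by
  have pointwise (x : ℝ × ℝ) : 2 * epsSq v1 v2 x = (gradSq v1 v2 x + divv v1 v2 x ^ 2)
      + 2 * (pd2 v1 x * pd1 v2 x - pd1 v1 x * pd2 v2 x) := by
    simp only [epsSq, gradSq, divv]; ring
  rw [← integral_const_mul, integral_congr_ae (.of_forall pointwise), integral_add, integral_add,
    integral_const_mul, integral_sub, integral_pd1_mul_pd2_comm h1 h2 hc2, sub_self, mul_zero,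
    add_zero]
  all_goals
    refine Continuous.integrable_of_eq_zero_off_tsupport ?_ hc1 hc2 fun x hx1 hx2 => ?_
    · (try unfold gradSq); fun_prop
    · simp [gradSq, divv, hx1, hx2]

theorem mul_integral_gradSq_le (lam mu : ℝ) (hlm : 0 ≤ lam + mu)
    (h1 : ContDiff ℝ (⊤ : ℕ∞) v1) (h2 : ContDiff ℝ (⊤ : ℕ∞) v2)
    (hc1 : HasCompactSupport v1) (hc2 : HasCompactSupport v2) :
    mu * ∫ x, gradSq v1 v2 x ≤ ∫ x, (lam * divv v1 v2 x ^ 2 + 2 * mu * epsSq v1 v2 x) := by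
  have hdiv : 0 ≤ ∫ x, divv v1 v2 x ^ 2 := integral_nonneg fun x => sq_nonneg _
  have energy : ∫ x, (lam * divv v1 v2 x ^ 2 + 2 * mu * epsSq v1 v2 x) =
      mu * (∫ x, gradSq v1 v2 x) + (lam + mu) * ∫ x, divv v1 v2 x ^ 2 := by
    rw [integral_add, integral_const_mul, integral_const_mul]
    · linear_combination mu * two_mul_integral_epsSq h1 h2 hc1 hc2
    all_goals
      refine (Continuous.integrable_of_eq_zero_off_tsupport ?_ hc1 hc2
        fun x hx1 hx2 => ?_).const_mul _
      · (try unfold epsSq); fun_prop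
      · simp [epsSq, divv, hx1, hx2]
  rw [energy]
  exact le_add_of_nonneg_right (mul_nonneg hlm hdiv)

theorem mul_integral_hessSq_le (lam mu : ℝ) (hlam : 0 ≤ lam) (hmu : 0 ≤ mu)
    (h1 : ContDiff ℝ (⊤ : ℕ∞) v1) (h2 : ContDiff ℝ (⊤ : ℕ∞) v2)
    (hc1 : HasCompactSupport v1) (hc2 : HasCompactSupport v2) :
    (2 - √2) * mu * ∫ x, hessSq v1 v2 x ≤
      ∫ x, (lam * gradDivSq v1 v2 x + 2 * mu * gradEpsSq v1 v2 x) := by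
  rw [← integral_const_mul]
  refine integral_mono ?_ ?_ fun x => ?_
  · refine (Continuous.integrable_of_eq_zero_off_tsupport ?_ hc1 hc2
      fun x hx1 hx2 => ?_).const_mul _
    · unfold hessSq; fun_prop
    · simp [hessSq, hx1, hx2]
  · refine Continuous.integrable_of_eq_zero_off_tsupport ?_ hc1 hc2 fun x hx1 hx2 => ?_
    · unfold gradDivSq gradEpsSq; fun_prop
    · simp [gradDivSq, gradEpsSq, hx1, hx2]
  · have hdiv : 0 ≤ gradDivSq v1 v2 x := by unfold gradDivSq; positivity
    nlinarith [mul_le_mul_of_nonneg_left (sub_sqrt_two_mul_hessSq_le v1 v2 x) hmu,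
      mul_nonneg hlam hdiv]

end Energy

theorem coercivity_strain_gradient_energy_general (lam mu iota : ℝ)
    (hlam : 0 ≤ lam) (hmu : 0 < mu)
    (v1 v2 : ℝ × ℝ → ℝ)
    (h1 : ContDiff ℝ (⊤ : ℕ∞) v1) (h2 : ContDiff ℝ (⊤ : ℕ∞) v2)
    (hc1 : HasCompactSupport v1) (hc2 : HasCompactSupport v2) :
    (∫ x : ℝ × ℝ, (lam * (divv v1 v2 x) ^ 2 + 2 * mu * epsSq v1 v2 x))
      + iota ^ 2 * ∫ x : ℝ × ℝ, (lam * gradDivSq v1 v2 x + 2 * mu * gradEpsSq v1 v2 x) ≥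
      (2 - Real.sqrt 2) * mu *
        ((∫ x : ℝ × ℝ, gradSq v1 v2 x) + iota ^ 2 * ∫ x : ℝ × ℝ, hessSq v1 v2 x) := by
  have first := mul_integral_gradSq_le lam mu (by linarith) h1 h2 hc1 hc2
  have second := mul_integral_hessSq_le lam mu hlam hmu.le h1 h2 hc1 hc2
  have hgrad : 0 ≤ ∫ x, gradSq v1 v2 x := integral_nonneg fun x => by unfold gradSq; positivity
  have hcoef : (2 - √2) * mu ≤ mu := by nlinarith [Real.one_lt_sqrt_two]
  linarith [mul_le_mul_of_nonneg_left second (sq_nonneg iota),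
    mul_le_mul_of_nonneg_right hcoef hgrad]

/-- Coercivity of the strain gradient elastic energy: for `λ ≥ 0`, `μ > 0`, `ι > 0` and
every `v = (v₁,v₂) ∈ C_c^∞(ℝ², ℝ²)`,
`a(v,v) = ∫ (λ (div v)² + 2μ |ε(v)|²) + ι² ∫ (λ |∇(div v)|² + 2μ |∇ε(v)|²)
  ≥ (2 − √2) μ (∫ |∇v|² + ι² ∫ |∇²v|²)`. -/
theorem coercivity_strain_gradient_energy (lam mu iota : ℝ)
    (hlam : 0 ≤ lam) (hmu : 0 < mu) (hiota : 0 < iota)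
    (v1 v2 : ℝ × ℝ → ℝ)
    (h1 : ContDiff ℝ (⊤ : ℕ∞) v1) (h2 : ContDiff ℝ (⊤ : ℕ∞) v2)
    (hc1 : HasCompactSupport v1) (hc2 : HasCompactSupport v2) :
    (∫ x : ℝ × ℝ, (lam * (divv v1 v2 x) ^ 2 + 2 * mu * epsSq v1 v2 x))
      + iota ^ 2 * ∫ x : ℝ × ℝ, (lam * gradDivSq v1 v2 x + 2 * mu * gradEpsSq v1 v2 x) ≥
      (2 - Real.sqrt 2) * mu *
        ((∫ x : ℝ × ℝ, gradSq v1 v2 x) + iota ^ 2 * ∫ x : ℝ × ℝ, hessSq v1 v2 x) :=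
  coercivity_strain_gradient_energy_general lam mu iota hlam hmu v1 v2 h1 h2 hc1 hc2
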